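/- Let ε ≥ 0, γ ≥ 0, and let (h,α,ϑ) be a minimizer of C in 𝓐. If max_{i=1,…,n}|h_i| < c_p^{-2} = π²/4, then (h,α,ϑ) is a regular point of 𝓐, i.e. the Fréchet differential DG(h,α,ϑ) : 𝓗 → (H^1_{0L}(I)ⁿ)' is surjective. -/

import Mathlib

open MeasureTheory Set

noncomputable def edot (p q : ℝ × ℝ) : ℝ := p.1 * q.1 + p.2 * q.2
noncomputable def enorm2 (p : ℝ × ℝ) : ℝ := Real.sqrt (p.1 ^ 2 + p.2 ^ 2)
noncomputable def Dmvec (v : ℝ) : ℝ × ℝ := (-Real.sin v, Real.cos v)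
noncomputable def D2mvec (v : ℝ) : ℝ × ℝ := (-Real.cos v, -Real.sin v)

noncomputable def mu01 : Measure ℝ := volume.restrict (Ioo 0 1)

/-- `H^1_{0L}(I)` modelled isometrically by the `L²(I)` space of derivatives. -/
noncomputable abbrev E := Lp ℝ 2 mu01

noncomputable def U (g : E) : ℝ → ℝ := fun t => ∫ s in Ioc 0 t, (g : ℝ → ℝ) s ∂mu01

/-- The admissible space `𝓗 = ℝ^{2n} × H^1_{0L}(I) × H^1_{0L}(I)ⁿ`. -/
noncomputable abbrev Hn (n : ℕ) := (Fin n → ℝ × ℝ) × E × (Fin n → E)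

/-- Weak solution of the state equation. -/
def IsStateSol (p : ℝ × ℝ) (a g : E) : Prop :=
  ∀ w : E, (∫ s, (g : ℝ → ℝ) s * (w : ℝ → ℝ) s ∂mu01)
    - (∫ s, edot p (Dmvec (U a s + U g s)) * U w s ∂mu01) = 0

/-- The admissible set `𝓐`. -/
def Admissible {n : ℕ} (x : Hn n) : Prop := ∀ i, IsStateSol (x.1 i) x.2.1 (x.2.2 i)

/-- The cost functional. -/
noncomputable def cost {n : ℕ} (tb : Fin n → ℝ → ℝ) (ε γ : ℝ) (x : Hn n) : ℝ :=
  (1 / 2) * ∑ i, (∫ s, (U (x.2.2 i) s - tb i s) ^ 2 ∂mu01)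
    + (ε / 2) * (∫ s, ((x.2.1 : ℝ → ℝ) s) ^ 2 ∂mu01)
    + (γ / 2) * ∑ i, (enorm2 (x.1 i)) ^ 2

/-- `⟨DG(h,α,ϑ)(k,β,ι), u⟩`, the Fréchet differential of the constraint mapping. -/
noncomputable def dgFormula {n : ℕ} (x y : Hn n) (u : Fin n → E) : ℝ :=
  ∑ i, (-(∫ s, edot (y.1 i) (Dmvec (U x.2.1 s + U (x.2.2 i) s)) * U (u i) s ∂mu01))
    + ∑ i, ((∫ s, (y.2.2 i : ℝ → ℝ) s * (u i : ℝ → ℝ) s ∂mu01)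
      - ∫ s, edot (x.1 i) (D2mvec (U x.2.1 s + U (x.2.2 i) s))
          * (U (y.2.2 i) s + U y.2.1 s) * U (u i) s ∂mu01)

/-! With `k = 0` and `β = 0` the differential decouples into the `n` bilinear forms
`(ι, u) ↦ ∫ ι' u' - ∫ hᵢ·D²m(α + ϑᵢ) ι u`, so it suffices that each of them is coercive on
`H^1_{0L}(I)`; Lax–Milgram then solves `DG(h,α,ϑ)(0,0,ι) = T` componentwise. Since `|D²m| = 1`,
the zeroth-order term is at most `|hᵢ| ∫ ι²`, and the sharp Poincaré inequality
`∫ ι² ≤ (4/π²) ∫ (ι')²` leaves the coercivity constant `1 - 4|hᵢ|/π² > 0`.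

The Poincaré inequality is a Schur test for the Volterra operator `w ↦ ∫₀ᵗ w`, weighted by the
first eigenfunction `sin (πt/2)` of `-v''` under `v(0) = v'(1) = 0` and by its derivative
`cos (πs/2)`: both Schur bounds then hold with the constant `2/π`. -/

open scoped ENNReal RealInnerProductSpace

instance : IsProbabilityMeasure mu01 := ⟨by simp [mu01, Real.volume_Ioo]⟩

instance : NullSingletonClass mu01 := by unfold mu01; infer_instance

section SchurTest

variable {F : Type*} [NormedAddCommGroup F] [NormedSpace ℝ F]

lemma enorm_integral_sq_le_lintegral_mul_lintegral_div {α : Type*} [MeasurableSpace α]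
    {μ : Measure α} {f : α → F} {φ : α → ℝ≥0∞} (hf : AEStronglyMeasurable f μ)
    (hφ : AEMeasurable φ μ) (hφ0 : ∀ᵐ s ∂μ, φ s ≠ 0) (hφtop : ∀ᵐ s ∂μ, φ s ≠ ∞) :
    ‖∫ s, f s ∂μ‖ₑ ^ 2 ≤ (∫⁻ s, φ s ∂μ) * ∫⁻ s, ‖f s‖ₑ ^ 2 / φ s ∂μ := by
  have hsplit : (fun s => ‖f s‖ₑ) =ᵐ[μ]
      (fun s => φ s ^ (1 / 2 : ℝ)) * fun s => (‖f s‖ₑ ^ 2 / φ s) ^ (1 / 2 : ℝ) := by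
    filter_upwards [hφ0, hφtop] with s h0 htop
    rw [Pi.mul_apply, ENNReal.div_rpow_of_nonneg _ _ (by norm_num),
      ENNReal.mul_div_cancel (by simp [h0]) (by simp [htop]), ← ENNReal.rpow_two,
      ← ENNReal.rpow_mul]
    norm_num
  have hholder := ENNReal.lintegral_mul_le_Lp_mul_Lq μ Real.HolderConjugate.two_two
    (hφ.pow_const (1 / 2 : ℝ)) (((hf.enorm.pow_const 2).div hφ).pow_const (1 / 2 : ℝ))
  simp only [← ENNReal.rpow_mul] at hholder
  norm_num at hholder
  calc ‖∫ s, f s ∂μ‖ₑ ^ 2 ≤ (∫⁻ s, ‖f s‖ₑ ∂μ) ^ 2 := by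
        gcongr; exact enorm_integral_le_lintegral_enorm f
    _ ≤ ((∫⁻ s, φ s ∂μ) ^ (1 / 2 : ℝ) * (∫⁻ s, ‖f s‖ₑ ^ 2 / φ s ∂μ) ^ (1 / 2 : ℝ)) ^ 2 := by
        rw [lintegral_congr_ae hsplit]; gcongr; exact hholder
    _ = (∫⁻ s, φ s ∂μ) * ∫⁻ s, ‖f s‖ₑ ^ 2 / φ s ∂μ := by
        rw [mul_pow, ← ENNReal.rpow_two, ← ENNReal.rpow_two, ← ENNReal.rpow_mul,
          ← ENNReal.rpow_mul]
        norm_num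

lemma lintegral_enorm_integral_Ioc_sq_le {μ : Measure ℝ} [SFinite μ] {f : ℝ → F}
    {φ ψ : ℝ → ℝ≥0∞} {a : ℝ} {C₁ C₂ : ℝ≥0∞} (hf : AEStronglyMeasurable f μ)
    (hφ : Measurable φ) (hψ : Measurable ψ)
    (hφ0 : ∀ᵐ s ∂μ, φ s ≠ 0) (hφtop : ∀ᵐ s ∂μ, φ s ≠ ∞)
    (hφψ : ∀ᵐ t ∂μ, ∫⁻ s in Ioc a t, φ s ∂μ ≤ C₁ * ψ t)
    (hψφ : ∀ᵐ s ∂μ, ∫⁻ t in Ici s, ψ t ∂μ ≤ C₂ * φ s) :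
    ∫⁻ t, ‖∫ s in Ioc a t, f s ∂μ‖ₑ ^ 2 ∂μ ≤ C₁ * C₂ * ∫⁻ s, ‖f s‖ₑ ^ 2 ∂μ := by
  set g : ℝ → ℝ≥0∞ := fun s => ‖f s‖ₑ ^ 2 / φ s
  have hg : AEMeasurable g μ := (hf.enorm.pow_const 2).div hφ.aemeasurable
  have hkernel : AEMeasurable (Function.uncurry fun t s => C₁ * (Ici s).indicator ψ t * g s)
      (μ.prod μ) := by
    refine AEMeasurable.mul (Measurable.aemeasurable ?_) hg.comp_snd
    refine measurable_const.mul (Measurable.ite ?_ (hψ.comp measurable_fst) measurable_const)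
    exact measurableSet_le measurable_snd measurable_fst
  calc ∫⁻ t, ‖∫ s in Ioc a t, f s ∂μ‖ₑ ^ 2 ∂μ
      ≤ ∫⁻ t, (∫⁻ s in Ioc a t, φ s ∂μ) * ∫⁻ s in Ioc a t, g s ∂μ ∂μ :=
        lintegral_mono fun t => enorm_integral_sq_le_lintegral_mul_lintegral_div hf.restrict
          hφ.aemeasurable (ae_restrict_of_ae hφ0) (ae_restrict_of_ae hφtop)
    _ ≤ ∫⁻ t, ∫⁻ s, C₁ * (Ici s).indicator ψ t * g s ∂μ ∂μ := by
        refine lintegral_mono_ae (hφψ.mono fun t ht => ?_)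
        calc (∫⁻ s in Ioc a t, φ s ∂μ) * ∫⁻ s in Ioc a t, g s ∂μ
            ≤ C₁ * ψ t * ∫⁻ s, (Ioc a t).indicator g s ∂μ := by
              rw [lintegral_indicator measurableSet_Ioc]; gcongr
          _ ≤ ∫⁻ s, C₁ * ψ t * (Ioc a t).indicator g s ∂μ := lintegral_const_mul_le _ _
          _ ≤ ∫⁻ s, C₁ * (Ici s).indicator ψ t * g s ∂μ := by
              refine lintegral_mono fun s => ?_
              by_cases hs : s ∈ Ioc a t
              · rw [indicator_of_mem hs, indicator_of_mem (mem_Ici.2 hs.2)]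
              · simp [indicator_of_notMem hs]
    _ = ∫⁻ s, C₁ * (∫⁻ t in Ici s, ψ t ∂μ) * g s ∂μ := by
        rw [lintegral_lintegral_swap hkernel]
        refine lintegral_congr fun s => ?_
        have hψs := hψ.indicator (measurableSet_Ici (a := s))
        rw [lintegral_mul_const _ (hψs.const_mul C₁), lintegral_const_mul _ hψs,
          lintegral_indicator measurableSet_Ici]
    _ ≤ ∫⁻ s, C₁ * C₂ * ‖f s‖ₑ ^ 2 ∂μ := by
        refine lintegral_mono_ae ((hψφ.and (hφ0.and hφtop)).mono fun s ⟨hs, h0, htop⟩ => ?_)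
        calc C₁ * (∫⁻ t in Ici s, ψ t ∂μ) * g s ≤ C₁ * (C₂ * φ s) * g s := by gcongr
          _ = C₁ * C₂ * ‖f s‖ₑ ^ 2 := by
            rw [mul_assoc, mul_assoc, ENNReal.mul_div_cancel h0 htop, mul_assoc]
    _ = C₁ * C₂ * ∫⁻ s, ‖f s‖ₑ ^ 2 ∂μ := lintegral_const_mul'' _ (hf.enorm.pow_const 2)

end SchurTest

lemma U_eq_inner (w : E) (t : ℝ) :
    U w t = ⟪indicatorConstLp 2 measurableSet_Ioc (measure_ne_top mu01 (Ioc 0 t)) (1 : ℝ), w⟫ :=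
  (L2.inner_indicatorConstLp_one _ _ w).symm

lemma U_add (a b : E) (t : ℝ) : U (a + b) t = U a t + U b t := by
  simp only [U_eq_inner, inner_add_right]

lemma U_smul (r : ℝ) (a : E) (t : ℝ) : U (r • a) t = r * U a t := by
  simp only [U_eq_inner, inner_smul_right]

lemma U_zero (t : ℝ) : U 0 t = 0 := by
  simp only [U_eq_inner, inner_zero_right]

lemma abs_U_le (w : E) (t : ℝ) : |U w t| ≤ ‖w‖ := by
  rw [U_eq_inner]
  refine (abs_real_inner_le_norm _ _).trans (mul_le_of_le_one_left (norm_nonneg _) ?_)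
  rw [norm_indicatorConstLp two_ne_zero ENNReal.ofNat_ne_top, norm_one, one_mul]
  exact Real.rpow_le_one ENNReal.toReal_nonneg (ENNReal.toReal_le_of_le_ofReal zero_le_one
    (by simpa using prob_le_one)) (by norm_num)

@[fun_prop]
lemma continuous_U (w : E) : Continuous (U w) := by
  have hU : U w = fun t => ∫ s in (0 : ℝ)..t, (w : ℝ → ℝ) s ∂mu01 := by
    funext t
    rcases le_or_gt 0 t with ht | ht
    · rw [intervalIntegral.integral_of_le ht, U]
    · have hnull : mu01 (Ioc t 0) = 0 := by
        rw [mu01, Measure.restrict_apply measurableSet_Ioc,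
          (Set.disjoint_left.2 fun s hs hs' => hs.2.not_gt hs'.1).inter_eq, measure_empty]
      rw [intervalIntegral.integral_of_ge ht.le, U, Ioc_eq_empty (not_lt.2 ht.le),
        Measure.restrict_eq_zero.2 hnull]
      simp
  rw [hU]
  exact intervalIntegral.continuous_primitive
    (fun _ _ => ((Lp.memLp w).integrable one_le_two).intervalIntegrable) 0

lemma integrable_mu01_of_continuous {f : ℝ → ℝ} (hf : Continuous f) : Integrable f mu01 :=
  hf.integrableOn_Icc.mono_set Ioo_subset_Icc_self

section Poincare

open Real

lemma lintegral_Ioc_ofReal_eq_intervalIntegral {f : ℝ → ℝ} {a b : ℝ} (hab : a ≤ b)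
    (hf : IntegrableOn f (Ioc a b)) (hf0 : ∀ x ∈ Ioc a b, 0 ≤ f x) :
    ∫⁻ x in Ioc a b, ENNReal.ofReal (f x) = ENNReal.ofReal (∫ x in a..b, f x) := by
  rw [intervalIntegral.integral_of_le hab,
    ofReal_integral_eq_lintegral_ofReal hf ((ae_restrict_mem measurableSet_Ioc).mono hf0)]

lemma integral_cos_pi_div_two_mul (t : ℝ) :
    ∫ s in (0 : ℝ)..t, cos (π / 2 * s) = 2 / π * sin (π / 2 * t) := by
  rw [intervalIntegral.integral_comp_mul_left cos (by positivity), integral_cos]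
  simp [div_eq_inv_mul]

lemma integral_sin_pi_div_two_mul (s : ℝ) :
    ∫ t in s..1, sin (π / 2 * t) = 2 / π * cos (π / 2 * s) := by
  rw [intervalIntegral.integral_comp_mul_left sin (by positivity), integral_sin, mul_one,
    cos_pi_div_two]
  simp [div_eq_inv_mul]

lemma cos_pi_div_two_mul_pos {s : ℝ} (hs : s ∈ Ioo (0 : ℝ) 1) : 0 < cos (π / 2 * s) := by
  apply cos_pos_of_mem_Ioo
  constructor <;> nlinarith [pi_pos, hs.1, hs.2]

lemma lintegral_Ioc_ofReal_cos_pi_div_two_mul {t : ℝ} (ht : t ∈ Ioo (0 : ℝ) 1) :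
    ∫⁻ s in Ioc 0 t, ENNReal.ofReal (cos (π / 2 * s)) ∂mu01
      = ENNReal.ofReal (2 / π) * ENNReal.ofReal (sin (π / 2 * t)) := by
  have hsub : Ioc 0 t ⊆ Ioo (0 : ℝ) 1 := fun s hs => ⟨hs.1, hs.2.trans_lt ht.2⟩
  rw [mu01, Measure.restrict_restrict measurableSet_Ioc, inter_eq_left.2 hsub,
    lintegral_Ioc_ofReal_eq_intervalIntegral ht.1.le
      ((by fun_prop : Continuous _).integrableOn_Ioc)
      fun s hs => (cos_pi_div_two_mul_pos (hsub hs)).le,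
    integral_cos_pi_div_two_mul, ENNReal.ofReal_mul (by positivity)]

lemma lintegral_Ici_ofReal_sin_pi_div_two_mul {s : ℝ} (hs : s ∈ Ioo (0 : ℝ) 1) :
    ∫⁻ t in Ici s, ENNReal.ofReal (sin (π / 2 * t)) ∂mu01
      = ENNReal.ofReal (2 / π) * ENNReal.ofReal (cos (π / 2 * s)) := by
  have hIci : Ici s ∩ Ioo 0 1 = Ico s 1 := by
    ext t
    simp only [mem_inter_iff, mem_Ici, mem_Ioo, mem_Ico]
    constructor
    · rintro ⟨h1, -, h3⟩; exact ⟨h1, h3⟩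
    · rintro ⟨h1, h2⟩; exact ⟨h1, hs.1.trans_le h1, h2⟩
  rw [mu01, Measure.restrict_restrict measurableSet_Ici, hIci,
    Measure.restrict_congr_set Ico_ae_eq_Ioc,
    lintegral_Ioc_ofReal_eq_intervalIntegral hs.2.le
      ((by fun_prop : Continuous _).integrableOn_Ioc) fun t ht => ?_,
    integral_sin_pi_div_two_mul, ENNReal.ofReal_mul (by positivity)]
  apply sin_nonneg_of_nonneg_of_le_pi <;> nlinarith [pi_pos, hs.1, ht.1, ht.2]

lemma lintegral_enorm_primitive_sq_le {F : Type*} [NormedAddCommGroup F] [NormedSpace ℝ F]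
    {f : ℝ → F} (hf : AEStronglyMeasurable f mu01) :
    ∫⁻ t, ‖∫ s in Ioc 0 t, f s ∂mu01‖ₑ ^ 2 ∂mu01
      ≤ ENNReal.ofReal (4 / π ^ 2) * ∫⁻ s, ‖f s‖ₑ ^ 2 ∂mu01 := by
  have hI : ∀ᵐ s ∂mu01, s ∈ Ioo (0 : ℝ) 1 := ae_restrict_mem measurableSet_Ioo
  have hconst : ENNReal.ofReal (4 / π ^ 2) = ENNReal.ofReal (2 / π) * ENNReal.ofReal (2 / π) := by
    rw [← ENNReal.ofReal_mul (by positivity)]; ring_nf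
  rw [hconst]
  refine lintegral_enorm_integral_Ioc_sq_le hf (by fun_prop) (by fun_prop)
    (hI.mono fun s hs => (ENNReal.ofReal_pos.2 (cos_pi_div_two_mul_pos hs)).ne')
    (ae_of_all _ fun _ => ENNReal.ofReal_ne_top)
    (hI.mono fun t ht => (lintegral_Ioc_ofReal_cos_pi_div_two_mul ht).le)
    (hI.mono fun s hs => (lintegral_Ici_ofReal_sin_pi_div_two_mul hs).le)

lemma integral_U_sq_le (w : E) : ∫ t, U w t ^ 2 ∂mu01 ≤ 4 / π ^ 2 * ‖w‖ ^ 2 := by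
  have hsq : ∀ x : ℝ, ENNReal.ofReal (x ^ 2) = ‖x‖ₑ ^ 2 := fun x => by
    rw [Real.enorm_eq_ofReal_abs, ← ENNReal.ofReal_pow (abs_nonneg x), sq_abs]
  have hnorm : ‖w‖ₑ ^ 2 = ∫⁻ s, ‖(w : ℝ → ℝ) s‖ₑ ^ 2 ∂mu01 := by
    simpa [Lp.enorm_def] using
      eLpNorm_nnreal_pow_eq_lintegral (f := (w : ℝ → ℝ)) (μ := mu01) (p := 2) two_ne_zero
  rw [← ENNReal.ofReal_le_ofReal_iff (by positivity),
    ofReal_integral_eq_lintegral_ofReal (integrable_mu01_of_continuous (by fun_prop))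
      (ae_of_all _ fun t => sq_nonneg _),
    ENNReal.ofReal_mul (by positivity), hsq, enorm_norm, hnorm]
  simp only [hsq]
  exact lintegral_enorm_primitive_sq_le (Lp.memLp w).aestronglyMeasurable

end Poincare

section LaxMilgram

variable {c : ℝ → ℝ} {M : ℝ}

lemma integral_mul_U_mul_U_add_left (hc : Continuous c) (a a' b : E) :
    ∫ s, c s * U (a + a') s * U b s ∂mu01
      = (∫ s, c s * U a s * U b s ∂mu01) + ∫ s, c s * U a' s * U b s ∂mu01 := by
  simp_rw [U_add, mul_add, add_mul]
  exact integral_add (integrable_mu01_of_continuous (by fun_prop))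
    (integrable_mu01_of_continuous (by fun_prop))

lemma integral_mul_U_mul_U_smul_left (r : ℝ) (a b : E) :
    ∫ s, c s * U (r • a) s * U b s ∂mu01 = r * ∫ s, c s * U a s * U b s ∂mu01 := by
  rw [← integral_const_mul]
  simp_rw [U_smul, mul_left_comm (c _) r, mul_assoc]

lemma integral_mul_U_mul_U_comm (a b : E) :
    ∫ s, c s * U a s * U b s ∂mu01 = ∫ s, c s * U b s * U a s ∂mu01 := by
  simp_rw [mul_right_comm (c _)]

lemma abs_integral_mul_U_mul_U_le (hbd : ∀ s, |c s| ≤ M) (a b : E) :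
    |∫ s, c s * U a s * U b s ∂mu01| ≤ M * ‖a‖ * ‖b‖ := by
  have hM : 0 ≤ M := (abs_nonneg _).trans (hbd 0)
  simpa using norm_integral_le_of_norm_le_const (μ := mu01)
    (f := fun s => c s * U a s * U b s) (ae_of_all _ fun s => by
      rw [norm_mul, norm_mul]
      exact mul_le_mul (mul_le_mul (hbd s) (abs_U_le a s) (abs_nonneg _) hM) (abs_U_le b s)
        (abs_nonneg _) (by positivity))

noncomputable def weightedPrimitiveForm (c : ℝ → ℝ) (hc : Continuous c) (hbd : ∀ s, |c s| ≤ M) :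
    E →L[ℝ] E →L[ℝ] ℝ :=
  LinearMap.mkContinuous₂
    (LinearMap.mk₂ ℝ (fun a b => ∫ s, c s * U a s * U b s ∂mu01)
      (integral_mul_U_mul_U_add_left hc) integral_mul_U_mul_U_smul_left
      (fun a b b' => by simp only [integral_mul_U_mul_U_comm a, integral_mul_U_mul_U_add_left hc])
      (fun r a b => by
        simp only [integral_mul_U_mul_U_comm a, integral_mul_U_mul_U_smul_left, smul_eq_mul]))
    M (abs_integral_mul_U_mul_U_le hbd)

/-- The weak form of `ι ↦ -ι'' - c ι` (`E` holds derivatives, so `⟪a, b⟫ = ∫ a' b'`). The `show`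
retypes `innerSL ℝ`, which is semilinear over `starRingEnd ℝ`, the identity only up to unfolding. -/
noncomputable def linearizedStateForm (c : ℝ → ℝ) (hc : Continuous c) (hbd : ∀ s, |c s| ≤ M) :
    E →L[ℝ] E →L[ℝ] ℝ :=
  (show E →L[ℝ] E →L[ℝ] ℝ from innerSL ℝ) - weightedPrimitiveForm c hc hbd

lemma integral_mul_eq_inner (a b : E) :
    ∫ s, (a : ℝ → ℝ) s * (b : ℝ → ℝ) s ∂mu01 = ⟪a, b⟫ := by
  rw [L2.inner_def]
  simp only [RCLike.inner_apply, conj_trivial, mul_comm]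

lemma linearizedStateForm_apply (hc : Continuous c) (hbd : ∀ s, |c s| ≤ M) (a b : E) :
    linearizedStateForm c hc hbd a b
      = (∫ s, (a : ℝ → ℝ) s * (b : ℝ → ℝ) s ∂mu01) - ∫ s, c s * U a s * U b s ∂mu01 := by
  rw [integral_mul_eq_inner]
  rfl

lemma isCoercive_linearizedStateForm (hc : Continuous c) (hbd : ∀ s, |c s| ≤ M)
    (hM : M < Real.pi ^ 2 / 4) : IsCoercive (linearizedStateForm c hc hbd) := by
  have hM0 : 0 ≤ M := (abs_nonneg _).trans (hbd 0)
  refine ⟨1 - M * (4 / Real.pi ^ 2), ?_, fun a => ?_⟩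
  · have : M * (4 / Real.pi ^ 2) < 1 := by
      rw [mul_div_assoc', div_lt_one (by positivity)]; linarith
    linarith
  · have hcU : ∫ s, c s * U a s * U a s ∂mu01 ≤ M * ∫ s, U a s ^ 2 ∂mu01 := by
      rw [← integral_const_mul]
      refine integral_mono (integrable_mu01_of_continuous (by fun_prop))
        (integrable_mu01_of_continuous (by fun_prop)) fun s => ?_
      rw [mul_assoc, ← sq]
      exact mul_le_mul_of_nonneg_right ((le_abs_self _).trans (hbd s)) (sq_nonneg _)
    have hpoincare := mul_le_mul_of_nonneg_left (integral_U_sq_le a) hM0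
    rw [linearizedStateForm_apply, integral_mul_eq_inner, real_inner_self_eq_norm_sq]
    nlinarith

lemma exists_linearizedStateForm_eq (hc : Continuous c) (hbd : ∀ s, |c s| ≤ M)
    (hM : M < Real.pi ^ 2 / 4) (f : E →L[ℝ] ℝ) :
    ∃ a : E, ∀ u : E, linearizedStateForm c hc hbd a u = f u := by
  set B := isCoercive_linearizedStateForm hc hbd hM
  refine ⟨B.continuousLinearEquivOfBilin.symm ((InnerProductSpace.toDual ℝ E).symm f), fun u => ?_⟩
  rw [← B.continuousLinearEquivOfBilin_apply, ContinuousLinearEquiv.apply_symm_apply,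
    InnerProductSpace.toDual_symm_apply]

end LaxMilgram

lemma abs_edot_D2mvec_le (p : ℝ × ℝ) (v : ℝ) : |edot p (D2mvec v)| ≤ enorm2 p := by
  refine Real.abs_le_sqrt ?_
  simp only [edot, D2mvec]
  nlinarith [sq_nonneg (p.1 * Real.sin v - p.2 * Real.cos v), Real.sin_sq_add_cos_sq v]

lemma continuous_edot_D2mvec_U (p : ℝ × ℝ) (a g : E) :
    Continuous fun s => edot p (D2mvec (U a s + U g s)) := by
  unfold edot D2mvec
  fun_prop

lemma dgFormula_zero_zero {n : ℕ} (x : Hn n) (ι u : Fin n → E) :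
    dgFormula x (0, 0, ι) u = ∑ i, linearizedStateForm _
      (continuous_edot_D2mvec_U (x.1 i) x.2.1 (x.2.2 i)) (fun _ => abs_edot_D2mvec_le _ _)
      (ι i) (u i) := by
  simp [dgFormula, linearizedStateForm_apply, edot, U_zero]

theorem minimizer_regular_point_small_field_general (n : ℕ)
    (x : Hn n)
    (hsmall : ∀ i, enorm2 (x.1 i) < Real.pi ^ 2 / 4) :
    ∀ T : (Fin n → E) →L[ℝ] ℝ, ∃ y : Hn n, ∀ u : Fin n → E, dgFormula x y u = T u := by
  intro T
  choose ι hι using fun i => exists_linearizedStateForm_eq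
    (continuous_edot_D2mvec_U (x.1 i) x.2.1 (x.2.2 i)) (fun _ => abs_edot_D2mvec_le _ _) (hsmall i)
    (T.comp (ContinuousLinearMap.single ℝ (fun _ => E) i))
  refine ⟨(0, 0, ι), fun u => ?_⟩
  simp only [dgFormula_zero_zero, hι, ContinuousLinearMap.comp_apply,
    ContinuousLinearMap.single_apply, ← map_sum, Finset.univ_sum_single]

/-- Theorem `lagmul2` (ii): if `(h,α,ϑ)` is a minimizer of `C` in `𝓐`
and `max_i |hᵢ| < c_p⁻² = π²/4`, then `(h,α,ϑ)` is a regular point of `𝓐`: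
the differential `DG(h,α,ϑ) : 𝓗 → (H^1_{0L}(I)ⁿ)'` is surjective. -/
theorem minimizer_regular_point_small_field (n : ℕ) (ε γ : ℝ) (hε : 0 ≤ ε) (hγ : 0 ≤ γ)
    (tb : Fin n → ℝ → ℝ) (htb : ∀ i, MemLp (tb i) 2 mu01)
    (x : Hn n) (hadm : Admissible x)
    (hmin : ∀ y : Hn n, Admissible y → cost tb ε γ x ≤ cost tb ε γ y)
    (hsmall : ∀ i, enorm2 (x.1 i) < Real.pi ^ 2 / 4) :
    ∀ T : (Fin n → E) →L[ℝ] ℝ, ∃ y : Hn n, ∀ u : Fin n → E, dgFormula x y u = T u :=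
  minimizer_regular_point_small_field_general n x hsmall
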